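/- arXiv:1805.04382 — 6 statements merged into one kernel-verified Lean document; each statement's English description precedes it below -/
import Mathlib

section
/- Let φ be a stability function on an abelian length category A, and let M be a nonzero object admitting a maximally destabilizing quotient (N, p). Then N is φ-semistable, and (N, p) is unique up to isomorphism: if (N', p') is another maximally destabilizing quotient of M, then there is an isomorphism f : N → N' with p' = f ∘ p. -/
open CategoryTheory CategoryTheory.Limits

universe u v

variable {C : Type u} [Category.{v} C] [Abelian C] {P : Type*} [LinearOrder P]

/-- The see-saw property for a stability function, on short exact sequences of nonzero objects. -/
def SeeSaw (φ : C → P) : Prop :=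
  ∀ S : ShortComplex C, S.ShortExact →
    ¬ IsZero S.X₁ → ¬ IsZero S.X₂ → ¬ IsZero S.X₃ →
    (φ S.X₁ < φ S.X₂ ∧ φ S.X₂ < φ S.X₃) ∨
    (φ S.X₃ < φ S.X₂ ∧ φ S.X₂ < φ S.X₁) ∨
    (φ S.X₁ = φ S.X₂ ∧ φ S.X₂ = φ S.X₃)

/-- A stability function is constant on isomorphism classes. -/
def IsoInvariant (φ : C → P) : Prop := ∀ ⦃M N : C⦄, (M ≅ N) → φ M = φ N

/-- `M` is φ-semistable: every nonzero proper subobject has phase ≤ φ M. -/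
def Semistable (φ : C → P) (M : C) : Prop :=
  ∀ ⦃L : C⦄ (i : L ⟶ M), Mono i → ¬ IsZero L → ¬ IsIso i → φ L ≤ φ M

/-- `M` is φ-stable: every nonzero proper subobject has phase < φ M. -/
def Stable (φ : C → P) (M : C) : Prop :=
  ∀ ⦃L : C⦄ (i : L ⟶ M), Mono i → ¬ IsZero L → ¬ IsIso i → φ L < φ M

/-- `(N, q)` is a maximally destabilizing quotient of `M`. -/
def IsMDQ (φ : C → P) {M N : C} (q : M ⟶ N) : Prop :=
  Epi q ∧ ¬ IsZero N ∧ φ N ≤ φ M ∧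
    ∀ ⦃N' : C⦄ (q' : M ⟶ N'), Epi q' → ¬ IsZero N' →
      φ N ≤ φ N' ∧ (φ N' = φ N → ∃ f : N ⟶ N', q' = q ≫ f)

/-- `(L, i)` is a maximally destabilizing subobject of `M`. -/
def IsMDS (φ : C → P) {M L : C} (i : L ⟶ M) : Prop :=
  Mono i ∧ ¬ IsZero L ∧ φ M ≤ φ L ∧
    ∀ ⦃L' : C⦄ (i' : L' ⟶ M), Mono i' → ¬ IsZero L' →
      φ L' ≤ φ L ∧ (φ L' = φ L → ∃ f : L' ⟶ L, i' = f ≫ i)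


theorem SeeSaw.le_of_le_right {φ : C → P} (hss : SeeSaw φ) {S : ShortComplex C}
    (hS : S.ShortExact) (h₁ : ¬ IsZero S.X₁) (h₂ : ¬ IsZero S.X₂) (h₃ : ¬ IsZero S.X₃)
    (h : φ S.X₂ ≤ φ S.X₃) : φ S.X₁ ≤ φ S.X₂ := by
  rcases hss S hS h₁ h₂ h₃ with ⟨h₁₂, -⟩ | ⟨h₃₂, -⟩ | ⟨h₁₂, -⟩
  · exact h₁₂.le
  · exact absurd h h₃₂.not_ge
  · exact h₁₂.le

theorem shortExact_cokernelSequence {X Y : C} (i : X ⟶ Y) [Mono i] :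
    (ShortComplex.mk i (cokernel.π i) (cokernel.condition i)).ShortExact :=
  ShortComplex.ShortExact.mk' (ShortComplex.exact_of_g_is_cokernel _ (cokernelIsCokernel i))
    inferInstance inferInstance

theorem not_isZero_cokernel_of_mono_of_not_isIso {X Y : C} (i : X ⟶ Y) [Mono i]
    (hi : ¬ IsIso i) : ¬ IsZero (cokernel i) := fun hz ↦
  have : Epi i := Preadditive.epi_of_isZero_cokernel i hz
  hi (isIso_of_mono_of_epi i)

omit [Abelian C] in
theorem isIso_of_epi_of_comp_eq_of_comp_eq {M N N' : C} {q : M ⟶ N} {q' : M ⟶ N'}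
    [Epi q] [Epi q'] {f : N ⟶ N'} {g : N' ⟶ N} (hf : q' = q ≫ f) (hg : q = q' ≫ g) :
    IsIso f :=
  ⟨g, by rw [← cancel_epi q, ← Category.assoc, ← hf, ← hg, Category.comp_id],
    by rw [← cancel_epi q', ← Category.assoc, ← hg, ← hf, Category.comp_id]⟩

namespace IsMDQ

variable {φ : C → P} {M N N' : C} {q : M ⟶ N} {q' : M ⟶ N'}

/-- A proper subobject `L ⊂ N` gives the quotient `M ↠ N ↠ N/L`, whose phase is at least `φ N`;
the see-saw property then forces `φ L ≤ φ N`. -/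
theorem semistable (hss : SeeSaw φ) (hq : IsMDQ φ q) : Semistable φ N := by
  obtain ⟨hqe, hN, -, hmax⟩ := hq
  intro L i _ hL hi
  have hcoker := not_isZero_cokernel_of_mono_of_not_isIso i hi
  exact hss.le_of_le_right (shortExact_cokernelSequence i) hL hN hcoker
    (hmax (q ≫ cokernel.π i) (epi_comp _ _) hcoker).1

omit [Abelian C] in
theorem phase_le (hq : IsMDQ φ q) (hq' : IsMDQ φ q') : φ N ≤ φ N' :=
  (hq.2.2.2 q' hq'.1 hq'.2.1).1

omit [Abelian C] in
theorem phase_eq (hq : IsMDQ φ q) (hq' : IsMDQ φ q') : φ N' = φ N :=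
  le_antisymm (hq'.phase_le hq) (hq.phase_le hq')

omit [Abelian C] in
theorem exists_comp_eq (hq : IsMDQ φ q) (hq' : IsMDQ φ q') : ∃ f : N ⟶ N', q' = q ≫ f :=
  (hq.2.2.2 q' hq'.1 hq'.2.1).2 (hq.phase_eq hq')

omit [Abelian C] in
theorem exists_isIso_comp_eq (hq : IsMDQ φ q) (hq' : IsMDQ φ q') :
    ∃ f : N ⟶ N', IsIso f ∧ q' = q ≫ f := by
  have := hq.1
  have := hq'.1
  obtain ⟨f, hf⟩ := hq.exists_comp_eq hq'
  obtain ⟨g, hg⟩ := hq'.exists_comp_eq hq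
  exact ⟨f, isIso_of_epi_of_comp_eq_of_comp_eq hf hg, hf⟩

end IsMDQ

/-- In an abelian length category, a maximally destabilizing quotient of a nonzero object
is φ-semistable and unique up to isomorphism. -/
theorem mdq_semistable_and_unique {C : Type u} [Category.{v} C] [Abelian C]
    [∀ X : C, IsNoetherianObject X] [∀ X : C, IsArtinianObject X]
    {P : Type*} [LinearOrder P] (φ : C → P)
    (hss : SeeSaw φ) (hiso : IsoInvariant φ)
    {M N : C} (hM : ¬ IsZero M) (q : M ⟶ N) (hq : IsMDQ φ q) :
    Semistable φ N ∧
      ∀ ⦃N' : C⦄ (q' : M ⟶ N'), IsMDQ φ q' → ∃ f : N ⟶ N', IsIso f ∧ q' = q ≫ f :=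
  ⟨hq.semistable hss, fun _ _ hq' ↦ hq.exists_isIso_comp_eq hq'⟩
end

section
/- Let φ be a stability function on an abelian length category A and p ∈ P. Then T_p equals the class of objects M such that φ(N) ≥ p for every nonzero quotient N of M, and T_p equals Filt(A_{≥p}), the class of objects admitting a finite filtration whose subquotients are φ-semistable of phase ≥ p. -/
/-!
By the see-saw property, the objects all of whose nonzero quotients have phase `≥ p` form a class
closed under extensions (a quotient of an extension is an extension of quotients) that contains
every semistable object of phase `≥ p`; so it contains `Filt (A_{≥ p})`. Conversely, a length
category has maximally destabilizing quotients, by Noetherian induction: if `M` is not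
semistable, it has a semistable subobject `A` of larger phase, and an MDQ of `M / A` is one of
`M`. The target of an MDQ `q : M ↠ N` is semistable, and every quotient of `ker q` has phase
`≥ φ N`, because pushing `ker q ↪ M ↠ N` out along that quotient gives a quotient of `M`.
Artinian induction on `ker q` then builds the filtration.
-/

open CategoryTheory CategoryTheory.Limits

universe u v

variable {C : Type u} [Category.{v} C] [Abelian C] {P : Type*} [LinearOrder P]

/-- Membership in `T_p`: zero, or the maximally destabilizing quotient has phase `≥ p`. -/
def TpMDQ (φ : C → P) (p : P) (M : C) : Prop :=
  IsZero M ∨ ∃ (N : C) (q : M ⟶ N), IsMDQ φ q ∧ p ≤ φ N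

/-- Membership in the torsion class `T_p`: the quotient-object characterization. -/
def TpQuot (φ : C → P) (p : P) (M : C) : Prop :=
  ∀ ⦃N : C⦄ (g : M ⟶ N), Epi g → ¬ IsZero N → p ≤ φ N

/-- `Filt X`: objects admitting a finite filtration with subquotients in `X`. -/
inductive Filt {C : Type u} [Category.{v} C] [Abelian C] (X : C → Prop) : C → Prop
  | of_isZero {M : C} (h : IsZero M) : Filt X M
  | step (S : ShortComplex C) (hS : S.ShortExact) (h1 : Filt X S.X₁) (h3 : X S.X₃) :
      Filt X S.X₂

/-- The class of φ-semistable objects of phase `≥ p`, together with the zero objects. -/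
def Ageq {C : Type u} [Category.{v} C] [Abelian C] {P : Type*} [LinearOrder P]
    (φ : C → P) (p : P) (M : C) : Prop :=
  IsZero M ∨ (Semistable φ M ∧ p ≤ φ M)

section General

variable {C : Type*} [Category C] {P : Type*} [LinearOrder P] {φ : C → P}

def IsProperSubobject (X Y : C) : Prop := ∃ i : X ⟶ Y, Mono i ∧ ¬ IsIso i

def IsProperQuotient (X Y : C) : Prop := ∃ q : Y ⟶ X, Epi q ∧ ¬ IsIso q

theorem wellFounded_isProperSubobject [∀ X : C, IsArtinianObject X] :
    WellFounded (IsProperSubobject (C := C)) := by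
  refine ⟨fun Y => ?_⟩
  suffices ∀ (A : Subobject Y) (X : C) (i : X ⟶ Y) [Mono i], Subobject.mk i = A →
      Acc IsProperSubobject X from this _ Y (𝟙 Y) rfl
  intro A
  induction A using WellFoundedLT.induction with
  | _ A ih =>
    rintro X i _ rfl
    exact ⟨_, fun Z ⟨j, _, hj⟩ => ih _ (Subobject.mk_lt_mk_of_comm j rfl hj) Z (j ≫ i) rfl⟩

theorem TpQuot.mono {p p' : P} (hp : p ≤ p') {M : C} (h : TpQuot φ p' M) : TpQuot φ p M :=
  fun _ g hg hN => hp.trans (h g hg hN)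

theorem TpQuot.isZero_or_le {p : P} {M N : C} (h : TpQuot φ p M) (g : M ⟶ N) [Epi g] :
    IsZero N ∨ p ≤ φ N :=
  or_iff_not_imp_left.2 (h g inferInstance)

theorem IsMDQ.tpQuot {M N : C} {q : M ⟶ N} (hq : IsMDQ φ q) : TpQuot φ (φ N) M :=
  fun _ q' hq' hN' => (hq.2.2.2 q' hq' hN').1

end General

theorem shortExact_kernel {M N : C} (q : M ⟶ N) [Epi q] :
    (ShortComplex.mk (kernel.ι q) q (kernel.condition q)).ShortExact :=
  .mk' (ShortComplex.exact_of_f_is_kernel _ (kernelIsKernel q)) inferInstance inferInstance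

theorem shortExact_cokernel {A M : C} (i : A ⟶ M) [Mono i] :
    (ShortComplex.mk i (cokernel.π i) (cokernel.condition i)).ShortExact :=
  .mk' (ShortComplex.exact_of_g_is_cokernel _ (cokernelIsCokernel i)) inferInstance inferInstance

theorem exists_shortExact_of_epi_middle {S : ShortComplex C} (hS : S.ShortExact) {Q : C}
    (g : S.X₂ ⟶ Q) [Epi g] :
    ∃ (Q₁ Q₃ : C) (m : Q₁ ⟶ Q) (e : Q ⟶ Q₃) (w : m ≫ e = 0) (e₁ : S.X₁ ⟶ Q₁) (e₃ : S.X₃ ⟶ Q₃),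
      (ShortComplex.mk m e w).ShortExact ∧ Epi e₁ ∧ Epi e₃ ∧ S.f ≫ g = e₁ ≫ m := by
  have hfg : S.f ≫ g ≫ cokernel.π (image.ι (S.f ≫ g)) = 0 := by
    rw [← Category.assoc, ← image.fac_assoc (S.f ≫ g) (cokernel.π _), cokernel.condition,
      comp_zero]
  obtain ⟨e₃, he₃⟩ := CokernelCofork.IsColimit.desc' hS.gIsCokernel _ hfg
  change S.g ≫ e₃ = _ at he₃
  have : Epi (S.g ≫ e₃) := by rw [he₃]; infer_instance
  exact ⟨_, _, _, _, _, factorThruImage (S.f ≫ g), e₃, shortExact_cokernel _, inferInstance,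
    epi_of_epi S.g e₃, (image.fac _).symm⟩

/-- The pushout of a short exact sequence along an epimorphism out of its left term. -/
theorem exists_shortExact_of_epi_left {S : ShortComplex C} (hS : S.ShortExact) {Q : C}
    (g : S.X₁ ⟶ Q) [Epi g] :
    ∃ (X : C) (m : Q ⟶ X) (r : X ⟶ S.X₃) (w : m ≫ r = 0) (e : S.X₂ ⟶ X),
      (ShortComplex.mk m r w).ShortExact ∧ Epi e := by
  have := hS.mono_f
  have := hS.epi_g
  have hw : S.f ≫ S.g = g ≫ 0 := by rw [S.zero, comp_zero]
  let r : pushout S.f g ⟶ S.X₃ := pushout.desc S.g 0 hw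
  have hr : pushout.inr S.f g ≫ r = 0 := pushout.inr_desc _ _ _
  have : Epi r := epi_of_epi_fac (pushout.inl_desc S.g 0 hw)
  have hcok : IsColimit (CokernelCofork.ofπ r hr) := by
    refine CokernelCofork.IsColimit.ofπ' _ _ (fun h hh => ?_)
    obtain ⟨k, hk⟩ := CokernelCofork.IsColimit.desc' hS.gIsCokernel (pushout.inl S.f g ≫ h)
      (by rw [← Category.assoc, pushout.condition, Category.assoc, hh, comp_zero])
    refine ⟨k, pushout.hom_ext ?_ ?_⟩
    · rw [pushout.inl_desc_assoc]; exact hk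
    · rw [pushout.inr_desc_assoc, zero_comp, hh]
  exact ⟨_, _, r, hr, pushout.inl S.f g,
    .mk' (ShortComplex.exact_of_g_is_cokernel _ hcok) inferInstance inferInstance, inferInstance⟩

theorem kernelSubobject_lt_kernelSubobject_comp {X Y Z : C} (g : X ⟶ Y) [Epi g] (q : Y ⟶ Z) [Epi q]
    (hq : ¬ IsIso q) : kernelSubobject g < kernelSubobject (g ≫ q) := by
  refine (kernelSubobject_comp_le g q).lt_of_ne fun h => hq ?_
  -- `g ≫ q` is the cokernel of its kernel, which `g` kills, so `g` factors through it
  have hk : kernel.ι (g ≫ q) ≫ g = 0 := by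
    have h₀ := kernelSubobject_arrow_comp g
    rw [h] at h₀
    rw [← kernelSubobject_arrow', Category.assoc, h₀, comp_zero]
  obtain ⟨r, hr⟩ := CokernelCofork.IsColimit.desc' (Abelian.epiIsCokernelOfKernel _
    (kernelIsKernel (g ≫ q))) g hk
  have : q ≫ r = 𝟙 Y := by rw [← cancel_epi g, ← Category.assoc]; simpa using hr
  have : Mono q := mono_of_mono_fac this
  exact isIso_of_mono_of_epi q

theorem wellFounded_isProperQuotient [∀ X : C, IsNoetherianObject X] :
    WellFounded (IsProperQuotient (C := C)) := by
  refine ⟨fun Y => ?_⟩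
  suffices ∀ (A : Subobject Y) (X : C) (g : Y ⟶ X) [Epi g], kernelSubobject g = A →
      Acc IsProperQuotient X from this _ Y (𝟙 Y) rfl
  intro A
  induction A using WellFoundedGT.induction with
  | _ A ih =>
    rintro X g _ rfl
    exact ⟨_, fun Z ⟨q, _, hq⟩ =>
      ih _ (kernelSubobject_lt_kernelSubobject_comp g q hq) Z (g ≫ q) rfl⟩

section Stability

variable {φ : C → P}

namespace SeeSaw

theorem sub_le_iff_le_quot (hss : SeeSaw φ) {S : ShortComplex C} (hS : S.ShortExact)
    (h₁ : ¬ IsZero S.X₁) (h₂ : ¬ IsZero S.X₂) (h₃ : ¬ IsZero S.X₃) :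
    φ S.X₁ ≤ φ S.X₂ ↔ φ S.X₂ ≤ φ S.X₃ := by
  rcases hss S hS h₁ h₂ h₃ with ⟨h, h'⟩ | ⟨h, h'⟩ | ⟨h, h'⟩
  · exact iff_of_true h.le h'.le
  · exact iff_of_false h'.not_ge h.not_ge
  · exact iff_of_true h.le h'.le

theorem le_sub_iff_quot_le (hss : SeeSaw φ) {S : ShortComplex C} (hS : S.ShortExact)
    (h₁ : ¬ IsZero S.X₁) (h₂ : ¬ IsZero S.X₂) (h₃ : ¬ IsZero S.X₃) :
    φ S.X₂ ≤ φ S.X₁ ↔ φ S.X₃ ≤ φ S.X₂ := by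
  rcases hss S hS h₁ h₂ h₃ with ⟨h, h'⟩ | ⟨h, h'⟩ | ⟨h, h'⟩
  · exact iff_of_false h.not_ge h'.not_ge
  · exact iff_of_true h'.le h.le
  · exact iff_of_true h.ge h'.ge

theorem le_phase_of_shortExact (hss : SeeSaw φ) (hiso : IsoInvariant φ) {S : ShortComplex C}
    (hS : S.ShortExact) (h₂ : ¬ IsZero S.X₂) {b : P} (h₁ : IsZero S.X₁ ∨ b ≤ φ S.X₁)
    (h₃ : IsZero S.X₃ ∨ b ≤ φ S.X₃) : b ≤ φ S.X₂ := by
  by_cases hz₁ : IsZero S.X₁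
  · have := hS.isIso_g_iff.2 hz₁
    rw [hiso (asIso S.g)]
    exact h₃.resolve_left fun hz₃ => h₂ (hz₃.of_iso (asIso S.g))
  by_cases hz₃ : IsZero S.X₃
  · have := hS.isIso_f_iff.2 hz₃
    rw [← hiso (asIso S.f)]
    exact h₁.resolve_left hz₁
  by_cases h : φ S.X₁ ≤ φ S.X₂
  · exact (h₁.resolve_left hz₁).trans h
  · have h' := mt (hss.sub_le_iff_le_quot hS hz₁ h₂ hz₃).2 h
    exact (h₃.resolve_left hz₃).trans (not_le.1 h').le

theorem lt_phase_of_shortExact (hss : SeeSaw φ) (hiso : IsoInvariant φ) {S : ShortComplex C}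
    (hS : S.ShortExact) (hz₁ : ¬ IsZero S.X₁) {b : P} (h₁ : b < φ S.X₁)
    (h₃ : IsZero S.X₃ ∨ b ≤ φ S.X₃) : b < φ S.X₂ := by
  have := hS.mono_f
  have h₂ : ¬ IsZero S.X₂ := fun h => hz₁ (h.of_mono S.f)
  by_cases hz₃ : IsZero S.X₃
  · have := hS.isIso_f_iff.2 hz₃
    rwa [← hiso (asIso S.f)]
  by_cases h : φ S.X₁ ≤ φ S.X₂
  · exact h₁.trans_le h
  · have h' := mt (hss.sub_le_iff_le_quot hS hz₁ h₂ hz₃).2 h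
    exact (h₃.resolve_left hz₃).trans_lt (not_le.1 h')

end SeeSaw

theorem Semistable.phase_le_of_epi (hss : SeeSaw φ) (hiso : IsoInvariant φ) {A Q : C}
    (hA : Semistable φ A) (q : A ⟶ Q) [Epi q] (hQ : ¬ IsZero Q) : φ A ≤ φ Q := by
  have hS := shortExact_kernel q
  by_cases hK : IsZero (kernel q)
  · have : IsIso q := hS.isIso_g_iff.2 hK
    exact (hiso (asIso q)).le
  · have hKA := hA (kernel.ι q) inferInstance hK fun h => hQ (hS.isIso_f_iff.1 h)
    exact (hss.sub_le_iff_le_quot hS hK (fun h => hQ (h.of_epi q)) hQ).1 hKA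

theorem tpQuot_of_isZero {p : P} {M : C} (hM : IsZero M) : TpQuot φ p M :=
  fun _ g _ hN => absurd (hM.of_epi g) hN

theorem TpQuot.of_shortExact (hss : SeeSaw φ) (hiso : IsoInvariant φ) {p : P}
    {S : ShortComplex C} (hS : S.ShortExact) (h₁ : TpQuot φ p S.X₁) (h₃ : TpQuot φ p S.X₃) :
    TpQuot φ p S.X₂ := by
  intro Q g _ hQ
  obtain ⟨_, _, _, _, _, e₁, e₃, hT, _, _, -⟩ := exists_shortExact_of_epi_middle hS g
  exact hss.le_phase_of_shortExact hiso hT hQ (h₁.isZero_or_le e₁) (h₃.isZero_or_le e₃)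

theorem Ageq.tpQuot (hss : SeeSaw φ) (hiso : IsoInvariant φ) {p : P} {M : C}
    (h : Ageq φ p M) : TpQuot φ p M := by
  rcases h with hM | ⟨hM, hp⟩
  · exact tpQuot_of_isZero hM
  · exact fun _ g _ hN => hp.trans (hM.phase_le_of_epi hss hiso g hN)

theorem Filt.tpQuot (hss : SeeSaw φ) (hiso : IsoInvariant φ) {p : P} {M : C}
    (h : Filt (Ageq φ p) M) : TpQuot φ p M := by
  induction h with
  | of_isZero hM => exact tpQuot_of_isZero hM
  | step S hS _ h₃ ih => exact ih.of_shortExact hss hiso hS (h₃.tpQuot hss hiso)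

theorem IsMDQ.semistable_s10 (hss : SeeSaw φ) {M N : C} {q : M ⟶ N} (hq : IsMDQ φ q) :
    Semistable φ N := by
  obtain ⟨_, hN, -, hmin⟩ := hq
  intro L i _ hL hi
  have hS := shortExact_cokernel i
  have hD : ¬ IsZero (cokernel i) := fun h => hi (hS.isIso_f_iff.2 h)
  exact (hss.sub_le_iff_le_quot hS hL hN hD).2 (hmin (q ≫ cokernel.π i) inferInstance hD).1

theorem IsMDQ.tpQuot_kernel (hss : SeeSaw φ) {M N : C} {q : M ⟶ N} (hq : IsMDQ φ q) :
    TpQuot φ (φ N) (kernel q) := by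
  obtain ⟨_, hN, -, hmin⟩ := hq
  intro Q g _ hQ
  -- `X` is a quotient of `M` which is an extension of `N` by `Q`
  obtain ⟨X, _, r, _, e, hT, _⟩ := exists_shortExact_of_epi_left (shortExact_kernel q) g
  have := hT.epi_g
  have hX : ¬ IsZero X := fun h => hN (h.of_epi r)
  have hNX := (hmin e inferInstance hX).1
  exact hNX.trans ((hss.le_sub_iff_quot_le hT hQ hX hN).2 hNX)

theorem isMDQ_id_of_semistable (hss : SeeSaw φ) (hiso : IsoInvariant φ) {M : C}
    (hM : Semistable φ M) (hMz : ¬ IsZero M) : IsMDQ φ (𝟙 M) :=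
  ⟨inferInstance, hMz, le_rfl, fun _ q' _ hN' =>
    ⟨hM.phase_le_of_epi hss hiso q' hN', fun _ => ⟨q', (Category.id_comp q').symm⟩⟩⟩

theorem exists_semistable_subobject [∀ X : C, IsArtinianObject X] (M : C)
    (hM : ¬ Semistable φ M) : ∃ (A : C) (i : A ⟶ M), Mono i ∧ ¬ IsZero A ∧ ¬ IsIso i ∧
      Semistable φ A ∧ φ M < φ A := by
  induction M using (wellFounded_isProperSubobject (C := C)).induction with | _ M ih =>
  simp only [Semistable, not_forall, not_le] at hM
  obtain ⟨L, i, _, hL, hi, hlt⟩ := hM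
  by_cases hLss : Semistable φ L
  · exact ⟨L, i, inferInstance, hL, hi, hLss, hlt⟩
  obtain ⟨A, j, _, hA, -, hAss, hlt'⟩ := ih L ⟨i, inferInstance, hi⟩ hLss
  refine ⟨A, j ≫ i, inferInstance, hA, fun _ => hi ?_, hAss, hlt.trans hlt'⟩
  have := epi_of_epi j i
  exact isIso_of_mono_of_epi i

theorem isMDQ_cokernel_π_comp (hss : SeeSaw φ) (hiso : IsoInvariant φ) {A M B : C}
    (i : A ⟶ M) [Mono i] (hA : Semistable φ A) (hAz : ¬ IsZero A) (hlt : φ M < φ A)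
    (π : cokernel i ⟶ B) (hπ : IsMDQ φ π) : IsMDQ φ (cokernel.π i ≫ π) := by
  obtain ⟨_, hB, hBD, hmin⟩ := hπ
  have hS := shortExact_cokernel i
  have hD : ¬ IsZero (cokernel i) := fun h => hB (h.of_epi π)
  have hM : ¬ IsZero M := fun h => hD (h.of_epi (cokernel.π i))
  have hDM : φ (cokernel i) < φ M :=
    not_le.1 fun h => hlt.not_ge ((hss.sub_le_iff_le_quot hS hAz hM hD).2 h)
  have hBM := hBD.trans_lt hDM
  refine ⟨inferInstance, hB, hBM.le, fun N' q' _ hN' => ?_⟩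
  by_cases hiq : i ≫ q' = 0
  · have := epi_of_epi_fac (cokernel.π_desc i q' hiq)
    obtain ⟨hle, hfac⟩ := hmin (cokernel.desc i q' hiq) inferInstance hN'
    refine ⟨hle, fun heq => ?_⟩
    obtain ⟨f, hf⟩ := hfac heq
    exact ⟨f, by rw [Category.assoc, ← hf, cokernel.π_desc]⟩
  -- otherwise `N'` is an extension of a quotient of `M / A` by a nonzero quotient of `A`
  obtain ⟨Q₁, _, m, _, _, e₁, e₃, hT, _, _, hfac⟩ := exists_shortExact_of_epi_middle hS q'
  have hQ₁ : ¬ IsZero Q₁ := fun h => hiq (hfac.trans (by rw [h.eq_of_src m 0, comp_zero]))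
  have hBQ₁ : φ B < φ Q₁ := (hBM.trans hlt).trans_le (hA.phase_le_of_epi hss hiso e₁ hQ₁)
  have hBN' : φ B < φ N' := hss.lt_phase_of_shortExact hiso hT hQ₁ hBQ₁
    (or_iff_not_imp_left.2 fun h => (hmin e₃ inferInstance h).1)
  exact ⟨hBN'.le, fun heq => absurd heq hBN'.ne'⟩

theorem exists_isMDQ [∀ X : C, IsArtinianObject X] [∀ X : C, IsNoetherianObject X]
    (hss : SeeSaw φ) (hiso : IsoInvariant φ) (M : C) (hM : ¬ IsZero M) :
    ∃ (N : C) (q : M ⟶ N), IsMDQ φ q := by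
  induction M using (wellFounded_isProperQuotient (C := C)).induction with | _ M ih =>
  by_cases hMss : Semistable φ M
  · exact ⟨M, 𝟙 M, isMDQ_id_of_semistable hss hiso hMss hM⟩
  obtain ⟨A, i, _, hA, hi, hAss, hlt⟩ := exists_semistable_subobject M hMss
  have hS := shortExact_cokernel i
  obtain ⟨B, π, hπ⟩ := ih (cokernel i) ⟨cokernel.π i, inferInstance,
    fun h => hA (hS.isIso_g_iff.1 h)⟩ fun h => hi (hS.isIso_f_iff.2 h)
  exact ⟨B, _, isMDQ_cokernel_π_comp hss hiso i hAss hA hlt π hπ⟩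

theorem tpMDQ_iff_tpQuot [∀ X : C, IsArtinianObject X] [∀ X : C, IsNoetherianObject X]
    (hss : SeeSaw φ) (hiso : IsoInvariant φ) (p : P) (M : C) :
    TpMDQ φ p M ↔ TpQuot φ p M := by
  refine ⟨?_, fun h => ?_⟩
  · rintro (hM | ⟨N, q, hq, hp⟩)
    · exact tpQuot_of_isZero hM
    · exact hq.tpQuot.mono hp
  by_cases hM : IsZero M
  · exact .inl hM
  obtain ⟨N, q, hq⟩ := exists_isMDQ hss hiso M hM
  exact .inr ⟨N, q, hq, h q hq.1 hq.2.1⟩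

theorem filt_ageq_of_tpQuot [∀ X : C, IsArtinianObject X] [∀ X : C, IsNoetherianObject X]
    (hss : SeeSaw φ) (hiso : IsoInvariant φ) {p : P} {M : C} (h : TpQuot φ p M) :
    Filt (Ageq φ p) M := by
  induction M using (wellFounded_isProperSubobject (C := C)).induction with | _ M ih =>
  by_cases hM : IsZero M
  · exact .of_isZero hM
  obtain ⟨N, q, hq⟩ := exists_isMDQ hss hiso M hM
  have := hq.1
  have hS := shortExact_kernel q
  have hpN : p ≤ φ N := h q hq.1 hq.2.1
  have hK := ih _ ⟨kernel.ι q, inferInstance, fun h => hq.2.1 (hS.isIso_f_iff.1 h)⟩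
    ((hq.tpQuot_kernel hss).mono hpN)
  exact .step _ hS hK (.inr ⟨hq.semistable_s10 hss, hpN⟩)

end Stability

/-- In an abelian length category, `T_p` (defined via maximally destabilizing quotients)
coincides with the quotient-object characterization and with `Filt (A_{≥ p})`. -/
theorem Tp_characterizations {C : Type u} [Category.{v} C] [Abelian C]
    [∀ X : C, IsNoetherianObject X] [∀ X : C, IsArtinianObject X]
    {P : Type*} [LinearOrder P] (φ : C → P)
    (hss : SeeSaw φ) (hiso : IsoInvariant φ) (p : P) :
    (∀ M : C, TpMDQ φ p M ↔ TpQuot φ p M) ∧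
    (∀ M : C, TpMDQ φ p M ↔ Filt (Ageq φ p) M) := by
  have hQuot := tpMDQ_iff_tpQuot hss hiso p
  exact ⟨hQuot, fun M => (hQuot M).trans
    ⟨filt_ageq_of_tpQuot hss hiso, Filt.tpQuot hss hiso⟩⟩
end

section
/- Let φ be a stability function on an abelian length category A and p ∈ P. Define T_p = {M : φ(N) ≥ p for every nonzero quotient N of M} and F_p = {M : φ(N) < p for every nonzero subobject N of M}. Then (T_p, F_p) is a torsion pair in A: Hom_A(T, F) = 0 for all T ∈ T_p, F ∈ F_p; if Hom_A(T, N) = 0 for all T ∈ T_p then N ∈ F_p; and if Hom_A(M, F) = 0 for all F ∈ F_p then M ∈ T_p. -/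
/-!
The image of a map `T ⟶ F` is a quotient of `T` and a subobject of `F`, so its phase is both
`≥ p` and `< p` unless it vanishes. For maximality, the see-saw property says that cutting a
quotient of phase `< p` off an object of phase `≥ p` leaves a kernel of phase `≥ p`. Hence a
minimal nonzero subobject of phase `≥ p`, which exists by Artinianity, lies in `T_p`; so an object
with a subobject of phase `≥ p` receives a nonzero map from `T_p`. Dually, by Noetherianity an
object with a quotient of phase `< p` maps nontrivially to `F_p`.
-/

open CategoryTheory CategoryTheory.Limits

universe u v

variable {C : Type u} [Category.{v} C] [Abelian C] {P : Type*} [LinearOrder P]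

/-- Membership in the torsion-free class `F_p`: the subobject characterization. -/
def Fp (φ : C → P) (p : P) (M : C) : Prop :=
  ∀ ⦃L : C⦄ (i : L ⟶ M), Mono i → ¬ IsZero L → φ L < p

namespace SeeSaw

lemma min_le_and_le_max {φ : C → P} (hss : SeeSaw φ) {S : ShortComplex C} (hS : S.ShortExact)
    (h₁ : ¬ IsZero S.X₁) (h₂ : ¬ IsZero S.X₂) (h₃ : ¬ IsZero S.X₃) :
    min (φ S.X₁) (φ S.X₃) ≤ φ S.X₂ ∧ φ S.X₂ ≤ max (φ S.X₁) (φ S.X₃) := by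
  rcases hss S hS h₁ h₂ h₃ with ⟨h, h'⟩ | ⟨h, h'⟩ | ⟨h, h'⟩
  · exact ⟨min_le_of_left_le h.le, le_max_of_le_right h'.le⟩
  · exact ⟨min_le_of_right_le h.le, le_max_of_le_left h'.le⟩
  · exact ⟨min_le_of_left_le h.le, le_max_of_le_right h'.le⟩

lemma le_phase_kernel {φ : C → P} (hss : SeeSaw φ) (hiso : IsoInvariant φ) {p : P} {M N : C}
    (g : M ⟶ N) [Epi g] (hN : ¬ IsZero N) (hM : p ≤ φ M) (hNp : φ N < p) :
    ¬ IsZero (kernel g) ∧ p ≤ φ (kernel g) := by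
  have hK : ¬ IsZero (kernel g) := fun hK => by
    have : Mono g := Preadditive.mono_of_isZero_kernel g hK
    have : IsIso g := isIso_of_mono_of_epi g
    exact (hiso (asIso g) ▸ hNp).not_ge hM
  have hS : (ShortComplex.mk _ _ (kernel.condition g)).ShortExact :=
    { exact := ShortComplex.exact_of_f_is_kernel _ (kernelIsKernel g) }
  have hmax := (hss.min_le_and_le_max hS hK (fun hM => hN (hM.of_epi g)) hN).2
  refine ⟨hK, ?_⟩
  simpa [hNp.not_ge] using hM.trans hmax

lemma phase_cokernel_lt {φ : C → P} (hss : SeeSaw φ) (hiso : IsoInvariant φ) {p : P} {L M : C}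
    (i : L ⟶ M) [Mono i] (hL : ¬ IsZero L) (hLp : p ≤ φ L) (hM : φ M < p) :
    ¬ IsZero (cokernel i) ∧ φ (cokernel i) < p := by
  have hQ : ¬ IsZero (cokernel i) := fun hQ => by
    have : Epi i := Preadditive.epi_of_isZero_cokernel i hQ
    have : IsIso i := isIso_of_mono_of_epi i
    exact (hiso (asIso i) ▸ hM).not_ge hLp
  have hS : (ShortComplex.mk _ _ (cokernel.condition i)).ShortExact :=
    { exact := ShortComplex.exact_of_g_is_cokernel _ (cokernelIsCokernel i) }
  have hmin := (hss.min_le_and_le_max hS hL (fun hM => hL (hM.of_mono i)) hQ).1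
  refine ⟨hQ, ?_⟩
  simpa [hLp.not_gt] using hmin.trans_lt hM

end SeeSaw

lemma CategoryTheory.Subobject.mk_kernel_lt_mk_kernel_comp {M Q Q' : C} (g : M ⟶ Q) [Epi g]
    (c : Q ⟶ Q') (hc : ¬ Mono c) :
    Subobject.mk (kernel.ι g) < Subobject.mk (kernel.ι (g ≫ c)) := by
  set f := kernel.lift (g ≫ c) (kernel.ι g) (by simp)
  refine Subobject.mk_lt_mk_of_comm f (kernel.lift_ι _ _ _) fun hf => hc ?_
  have hker : kernel.ι (g ≫ c) ≫ g = 0 := by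
    rw [← IsIso.inv_hom_id_assoc f (kernel.ι (g ≫ c)), kernel.lift_ι, Category.assoc,
      kernel.condition, comp_zero]
  refine Preadditive.mono_of_cancel_zero c fun y hy => ?_
  obtain ⟨A, π, _, x, fac⟩ := surjective_up_to_refinements_of_epi g y
  have hx : x ≫ g ≫ c = 0 := by rw [← Category.assoc, ← fac, Category.assoc, hy, comp_zero]
  rw [← cancel_epi π, fac, comp_zero, ← kernel.lift_ι _ x hx, Category.assoc, hker, comp_zero]

lemma exists_mono_tpQuot {φ : C → P} (hss : SeeSaw φ) (hiso : IsoInvariant φ) {p : P} {M : C}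
    [IsArtinianObject M] (hM : ¬ IsZero M) (hp : p ≤ φ M) :
    ∃ (T : C) (j : T ⟶ M), Mono j ∧ ¬ IsZero T ∧ TpQuot φ p T := by
  have htop : (⊤ : Subobject M) ∈ {S : Subobject M | ¬ IsZero (S : C) ∧ p ≤ φ S} := by
    have e := Subobject.isoOfEq _ _ (Subobject.top_eq_id M) ≪≫ Subobject.underlyingIso (𝟙 M)
    exact ⟨fun h => hM (h.of_iso e.symm), (hiso e).symm ▸ hp⟩
  obtain ⟨S, ⟨hS, hSp⟩, hmin⟩ := wellFounded_lt.has_min _ ⟨_, htop⟩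
  refine ⟨S, S.arrow, inferInstance, hS, fun N g _ hN => not_lt.mp fun hNp => ?_⟩
  obtain ⟨hK, hKp⟩ := hss.le_phase_kernel hiso g hN hSp hNp
  have hlt : Subobject.mk (kernel.ι g ≫ S.arrow) < S := by
    conv_rhs => rw [← Subobject.mk_arrow S]
    refine Subobject.mk_lt_mk_of_comm _ rfl fun _ => hN (IsZero.of_epi_eq_zero g ?_)
    rw [← cancel_epi (kernel.ι g), kernel.condition, comp_zero]
  have e := Subobject.underlyingIso (kernel.ι g ≫ S.arrow)
  exact hmin _ ⟨fun h => hK (h.of_iso e.symm), (hiso e).symm ▸ hKp⟩ hlt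

-- A quotient `q` of `M` is recorded by its kernel, so Noetherianity yields one with maximal kernel.
lemma exists_epi_fp {φ : C → P} (hss : SeeSaw φ) (hiso : IsoInvariant φ) {p : P} {M : C}
    [IsNoetherianObject M] (hM : ¬ IsZero M) (hp : φ M < p) :
    ∃ (F : C) (q : M ⟶ F), Epi q ∧ ¬ IsZero F ∧ Fp φ p F := by
  obtain ⟨S, ⟨F, q, _, rfl, hF, hFp⟩, hmax⟩ := wellFounded_gt.has_min
    {S : Subobject M | ∃ (F : C) (q : M ⟶ F), Epi q ∧ Subobject.mk (kernel.ι q) = S ∧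
      ¬ IsZero F ∧ φ F < p} ⟨_, M, 𝟙 M, inferInstance, rfl, hM, hp⟩
  refine ⟨F, q, inferInstance, hF, fun L i _ hL => not_le.mp fun hLp => ?_⟩
  obtain ⟨hQ, hQp⟩ := hss.phase_cokernel_lt hiso i hL hLp hFp
  refine hmax _ ⟨_, q ≫ cokernel.π i, inferInstance, rfl, hQ, hQp⟩
    (Subobject.mk_kernel_lt_mk_kernel_comp q _ fun _ => hL (IsZero.of_mono_eq_zero i ?_))
  rw [← cancel_mono (cokernel.π i), cokernel.condition, zero_comp]

lemma eq_zero_of_tpQuot_of_fp {φ : C → P} {p : P} {T F : C} (hT : TpQuot φ p T) (hF : Fp φ p F)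
    (f : T ⟶ F) : f = 0 := by
  by_cases hz : IsZero (Abelian.image f)
  · rw [← Abelian.image.fac f, hz.eq_of_src (Abelian.image.ι f) 0, comp_zero]
  · exact absurd (hF (Abelian.image.ι f) inferInstance hz)
      (not_lt.mpr (hT (Abelian.factorThruImage f) inferInstance hz))

lemma fp_of_forall_hom_tpQuot_eq_zero {φ : C → P} (hss : SeeSaw φ) (hiso : IsoInvariant φ)
    {p : P} [∀ X : C, IsArtinianObject X] {N : C}
    (hN : ∀ ⦃T : C⦄, TpQuot φ p T → ∀ f : T ⟶ N, f = 0) : Fp φ p N := by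
  intro L i _ hL
  by_contra! hLp
  obtain ⟨T, j, _, hT, hTp⟩ := exists_mono_tpQuot hss hiso hL hLp
  exact hT (IsZero.of_mono_eq_zero (j ≫ i) (hN hTp _))

lemma tpQuot_of_forall_hom_fp_eq_zero {φ : C → P} (hss : SeeSaw φ) (hiso : IsoInvariant φ)
    {p : P} [∀ X : C, IsNoetherianObject X] {M : C}
    (hM : ∀ ⦃F : C⦄, Fp φ p F → ∀ f : M ⟶ F, f = 0) : TpQuot φ p M := by
  intro Q g _ hQ
  by_contra! hQp
  obtain ⟨F, q, _, hF, hFp⟩ := exists_epi_fp hss hiso hQ hQp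
  exact hF (IsZero.of_epi_eq_zero (g ≫ q) (hM hFp _))

/-- `(T_p, F_p)` is a torsion pair: `Hom(T_p, F_p) = 0`, and each class is maximal with
respect to this vanishing. -/
theorem Tp_Fp_torsion_pair {C : Type u} [Category.{v} C] [Abelian C]
    [∀ X : C, IsNoetherianObject X] [∀ X : C, IsArtinianObject X]
    {P : Type*} [LinearOrder P] (φ : C → P)
    (hss : SeeSaw φ) (hiso : IsoInvariant φ) (p : P) :
    (∀ ⦃T F : C⦄, TpQuot φ p T → Fp φ p F → ∀ f : T ⟶ F, f = 0) ∧
    (∀ N : C, (∀ ⦃T : C⦄, TpQuot φ p T → ∀ f : T ⟶ N, f = 0) → Fp φ p N) ∧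
    (∀ M : C, (∀ ⦃F : C⦄, Fp φ p F → ∀ f : M ⟶ F, f = 0) → TpQuot φ p M) := by
  exact ⟨fun _ _ hT hF => eq_zero_of_tpQuot_of_fp hT hF,
    fun _ => fp_of_forall_hom_tpQuot_eq_zero hss hiso,
    fun _ => tpQuot_of_forall_hom_fp_eq_zero hss hiso⟩
end

section
/- Let φ be a stability function on an abelian length category A and p ∈ P. Then the simple objects of the wide subcategory A_p (zero together with all φ-semistable objects of phase p) are exactly the φ-stable objects of phase p. -/
open CategoryTheory CategoryTheory.Limits

universe u v

variable {C : Type u} [Category.{v} C] [Abelian C] {P : Type*} [LinearOrder P]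

/-- The class `A_p` of the zero objects and the φ-semistable objects of phase exactly `p`. -/
def Ap {C : Type u} [Category.{v} C] [Abelian C] {P : Type*} [LinearOrder P]
    (φ : C → P) (p : P) (M : C) : Prop :=
  IsZero M ∨ (Semistable φ M ∧ φ M = p)

/-! A nonzero proper subobject of a semistable object with the same phase is again semistable,
since its subobjects are subobjects of the ambient object; so it lies in `A_p` and obstructs
simplicity. Stability rules out exactly such subobjects. -/

section

omit [Abelian C]

theorem not_isIso_comp_of_not_isIso [Balanced C] {L M K : C} (j : K ⟶ L) (i : L ⟶ M) [Mono i]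
    (hj : ¬ IsIso j) : ¬ IsIso (j ≫ i) := by
  intro hji
  have : Epi i := epi_of_epi j i
  have : IsIso i := isIso_of_mono_of_epi i
  exact hj (IsIso.of_isIso_comp_right j i)

theorem Semistable.of_mono_of_phase_eq [Balanced C] {φ : C → P} {L M : C} (hM : Semistable φ M)
    (i : L ⟶ M) (hi : Mono i) (hφ : φ L = φ M) : Semistable φ L := by
  intro K j hj hK hnj
  calc φ K ≤ φ M := hM (j ≫ i) (mono_comp j i) hK (not_isIso_comp_of_not_isIso j i hnj)
    _ = φ L := hφ.symm

theorem Stable.semistable {φ : C → P} {M : C} (hM : Stable φ M) : Semistable φ M :=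
  fun _ i hi hL hni => (hM i hi hL hni).le

theorem Stable.isIso_of_phase_eq {φ : C → P} {L M : C} (hM : Stable φ M)
    (i : L ⟶ M) (hi : Mono i) (hL : ¬ IsZero L) (hφ : φ L = φ M) : IsIso i := by
  by_contra hni
  exact (hM i hi hL hni).ne hφ

end

/-- The simple objects of the wide subcategory `A_p` (nonzero objects of `A_p` with no
nonzero proper subobject lying in `A_p`) are exactly the φ-stable objects of phase `p`. -/
theorem simple_in_Ap_iff_stable {C : Type u} [Category.{v} C] [Abelian C]
    [∀ X : C, IsNoetherianObject X] [∀ X : C, IsArtinianObject X]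
    {P : Type*} [LinearOrder P] (φ : C → P)
    (hss : SeeSaw φ) (hiso : IsoInvariant φ) (p : P) (M : C) :
    (Ap φ p M ∧ ¬ IsZero M ∧
        ∀ ⦃L : C⦄ (i : L ⟶ M), Mono i → Ap φ p L → ¬ IsZero L → IsIso i) ↔
      (¬ IsZero M ∧ Stable φ M ∧ φ M = p) := by
  constructor
  · rintro ⟨hAp, hM, hsimple⟩
    obtain ⟨hsemi, hp⟩ := hAp.resolve_left hM
    refine ⟨hM, fun L i hi hL hni => (hsemi i hi hL hni).lt_of_ne fun hφ => hni ?_, hp⟩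
    exact hsimple i hi (Or.inr ⟨hsemi.of_mono_of_phase_eq i hi hφ, hφ.trans hp⟩) hL
  · rintro ⟨hM, hst, hp⟩
    refine ⟨Or.inr ⟨hst.semistable, hp⟩, hM, fun L i hi hAL hL => ?_⟩
    obtain ⟨-, hLp⟩ := hAL.resolve_left hL
    exact hst.isIso_of_phase_eq i hi hL (hLp.trans hp.symm)
end

section
/- Let A be an abelian length category with Grothendieck group of rank n, equipped with a pairing ⟨·,·⟩ : ℝⁿ × K₀(A) → ℝ, and let γ : [0,1] → ℝⁿ be a red path. Then the function φ_γ sending a nonzero object M to the unique t_M ∈ [0,1] with ⟨γ(t_M), [M]⟩ = 0 is a stability function on A: it satisfies the see-saw property on every short exact sequence of nonzero objects. -/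
open CategoryTheory CategoryTheory.Limits Set

universe u v

variable {C : Type u} [Category.{v} C] [Abelian C]

/-- Sign of the pairing off the unique zero. -/
lemma redPath_sign {n : ℕ} (w : Fin n → ℝ) (hw1 : ∀ i, 0 ≤ w i) (hw2 : ∃ i, 0 < w i)
    (γ : ℝ → Fin n → ℝ) (hcont : ContinuousOn γ (Set.Icc 0 1))
    (hγ0 : γ 0 = fun _ => (1 : ℝ)) (hγ1 : γ 1 = fun _ => (-1 : ℝ))
    (huniq : ∃! t : ℝ, t ∈ Set.Icc (0 : ℝ) 1 ∧ ∑ i, γ t i * w i = 0)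
    (t0 : ℝ) (ht0 : t0 ∈ Set.Icc (0:ℝ) 1) (ht0z : ∑ i, γ t0 i * w i = 0)
    (t : ℝ) (ht : t ∈ Set.Icc (0:ℝ) 1) :
    (t < t0 → 0 < ∑ i, γ t i * w i) ∧ (t0 < t → ∑ i, γ t i * w i < 0) := by
  set f : ℝ → ℝ := fun s => ∑ i, γ s i * w i with hf
  have hfc : ContinuousOn f (Set.Icc 0 1) := by
    apply continuousOn_finset_sum
    intro i _
    exact (((continuous_apply i).comp_continuousOn hcont)).mul continuousOn_const
  have hpos0 : 0 < f 0 := by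
    simp only [hf, hγ0]
    simp only [one_mul]
    obtain ⟨i, hi⟩ := hw2
    exact Finset.sum_pos' (fun j _ => hw1 j) ⟨i, Finset.mem_univ i, hi⟩
  have hneg1 : f 1 < 0 := by
    simp only [hf, hγ1]
    have : ∑ i, (-1 : ℝ) * w i = -∑ i, w i := by
      simp [neg_mul, Finset.sum_neg_distrib]
    rw [this, neg_neg_iff_pos]
    obtain ⟨i, hi⟩ := hw2
    exact Finset.sum_pos' (fun j _ => hw1 j) ⟨i, Finset.mem_univ i, hi⟩
  have huniq' : ∀ s ∈ Set.Icc (0:ℝ) 1, f s = 0 → s = t0 := by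
    intro s hs hsz
    obtain ⟨u, _, hu⟩ := huniq
    rw [hu s ⟨hs, hsz⟩, hu t0 ⟨ht0, ht0z⟩]
  constructor
  · intro hlt
    by_contra h
    push_neg at h
    have hne : f t ≠ 0 := fun hz => absurd (huniq' t ht hz) (ne_of_lt hlt)
    have hneg : f t < 0 := lt_of_le_of_ne h hne
    -- IVT on [0, t]
    have hsub : Set.Icc (0:ℝ) t ⊆ Set.Icc 0 1 := Set.Icc_subset_Icc le_rfl ht.2
    have := intermediate_value_Icc' ht.1 (hfc.mono hsub)
    have h0 : (0:ℝ) ∈ Set.Icc (f t) (f 0) := ⟨hneg.le, hpos0.le⟩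
    obtain ⟨s, hs, hsz⟩ := this h0
    have := huniq' s (hsub hs) hsz
    subst this
    exact absurd hlt (not_lt.mpr hs.2)
  · intro hlt
    by_contra h
    push_neg at h
    have hne : f t ≠ 0 := fun hz => absurd (huniq' t ht hz) (ne_of_gt hlt)
    have hpos : 0 < f t := lt_of_le_of_ne h (Ne.symm hne)
    have hsub : Set.Icc t 1 ⊆ Set.Icc 0 1 := Set.Icc_subset_Icc ht.1 le_rfl
    have := intermediate_value_Icc' ht.2 (hfc.mono hsub)
    have h0 : (0:ℝ) ∈ Set.Icc (f 1) (f t) := ⟨hneg1.le, hpos.le⟩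
    obtain ⟨s, hs, hsz⟩ := this h0
    have := huniq' s (hsub hs) hsz
    subst this
    exact absurd hlt (not_lt.mpr hs.1)

/-- The phase function `φ_γ = tM` induced by a red path `γ` satisfies the see-saw
property on every short exact sequence of nonzero objects, i.e. it is a stability
function. -/
theorem redPath_seesaw
    {n : ℕ} (v : C → Fin n → ℝ)
    -- `v M` is the dimension vector (class in `K₀`) of `M`:
    (hv0 : ∀ M : C, IsZero M → v M = 0)
    (hvpos : ∀ M : C, ¬ IsZero M → (∀ i, 0 ≤ v M i) ∧ ∃ i, 0 < v M i)
    (hadd : ∀ S : ShortComplex C, S.ShortExact → v S.X₂ = v S.X₁ + v S.X₃)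
    -- `γ` is a red path:
    (γ : ℝ → Fin n → ℝ) (hcont : ContinuousOn γ (Set.Icc 0 1))
    (hγ0 : γ 0 = fun _ => (1 : ℝ)) (hγ1 : γ 1 = fun _ => (-1 : ℝ))
    (huniq : ∀ M : C, ¬ IsZero M →
      ∃! t : ℝ, t ∈ Set.Icc (0 : ℝ) 1 ∧ ∑ i, γ t i * v M i = 0)
    -- `tM M` is the unique zero of `t ↦ ⟨γ t, [M]⟩` on `[0,1]`, i.e. `φ_γ(M) = tM M`:
    (tM : C → ℝ)
    (htM : ∀ M : C, ¬ IsZero M →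
      tM M ∈ Set.Icc (0 : ℝ) 1 ∧ ∑ i, γ (tM M) i * v M i = 0)
    :
    ∀ S : ShortComplex C, S.ShortExact →
      ¬ IsZero S.X₁ → ¬ IsZero S.X₂ → ¬ IsZero S.X₃ →
      (tM S.X₁ < tM S.X₂ ∧ tM S.X₂ < tM S.X₃) ∨
      (tM S.X₃ < tM S.X₂ ∧ tM S.X₂ < tM S.X₁) ∨
      (tM S.X₁ = tM S.X₂ ∧ tM S.X₂ = tM S.X₃) := by
  intro S hS h1 h2 h3
  obtain ⟨ha, haz⟩ := htM S.X₁ h1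
  obtain ⟨hb, hbz⟩ := htM S.X₂ h2
  obtain ⟨hc, hcz⟩ := htM S.X₃ h3
  set a := tM S.X₁
  set b := tM S.X₂
  set c := tM S.X₃
  -- pairing of X₂ at b splits as sum of pairings of X₁ and X₃
  have hsplit : ∀ t : ℝ, ∑ i, γ t i * v S.X₂ i
      = (∑ i, γ t i * v S.X₁ i) + ∑ i, γ t i * v S.X₃ i := by
    intro t
    rw [hadd S hS, ← Finset.sum_add_distrib]
    exact Finset.sum_congr rfl fun i _ => by simp [mul_add]
  have hkey : (∑ i, γ b i * v S.X₁ i) + ∑ i, γ b i * v S.X₃ i = 0 := by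
    rw [← hsplit b]; exact hbz
  have hsign1 := redPath_sign (v S.X₁) (hvpos S.X₁ h1).1 (hvpos S.X₁ h1).2 γ hcont hγ0 hγ1
    (huniq S.X₁ h1) a ha haz b hb
  have hsign3 := redPath_sign (v S.X₃) (hvpos S.X₃ h3).1 (hvpos S.X₃ h3).2 γ hcont hγ0 hγ1
    (huniq S.X₃ h3) c hc hcz b hb
  rcases lt_trichotomy a b with h | h | h
  · left
    refine ⟨h, ?_⟩
    -- f₁(b) < 0 since b > a, hence f₃(b) > 0, hence b < c
    have h1neg : ∑ i, γ b i * v S.X₁ i < 0 := hsign1.2 h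
    have h3pos : 0 < ∑ i, γ b i * v S.X₃ i := by linarith
    by_contra hcb
    push_neg at hcb
    rcases eq_or_lt_of_le hcb with he | hlt
    · have h3z := he ▸ hcz; linarith
    · linarith [hsign3.2 hlt]
  · right; right
    refine ⟨h, ?_⟩
    have h1z : ∑ i, γ b i * v S.X₁ i = 0 := by rw [← h]; exact haz
    have h3z : ∑ i, γ b i * v S.X₃ i = 0 := by linarith
    obtain ⟨u, _, hu⟩ := huniq S.X₃ h3
    rw [hu b ⟨hb, h3z⟩, hu c ⟨hc, hcz⟩]
  · right; left
    have h1pos : 0 < ∑ i, γ b i * v S.X₁ i := hsign1.1 h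
    have h3neg : ∑ i, γ b i * v S.X₃ i < 0 := by linarith
    refine ⟨?_, h⟩
    by_contra hcb
    push_neg at hcb
    rcases eq_or_lt_of_le hcb with he | hlt
    · have h3z := he.symm ▸ hcz; linarith
    · linarith [hsign3.1 hlt]
end

section
/- Let γ be a red path in ℝⁿ for an abelian length category A of rank n, and let φ_γ be the induced stability function with φ_γ(M) = t_M. Then a nonzero object M is φ_γ-semistable if and only if M is θ-semistable in King's sense for θ = γ(t_M), i.e., ⟨γ(t_M), [M]⟩ = 0 and ⟨γ(t_M), [L]⟩ ≤ 0 for every proper subobject L of M. -/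
open CategoryTheory CategoryTheory.Limits

universe u v

variable {C : Type u} [Category.{v} C] [Abelian C]

/-- A nonzero object `M` is semistable for the stability function `φ_γ = tM` induced by
a red path `γ` iff `M` is `θ`-semistable in King's sense for `θ = γ (tM M)`. -/
theorem redPath_semistable_iff_king
    {n : ℕ} (v : C → Fin n → ℝ)
    -- `v M` is the dimension vector (class in `K₀`) of `M`:
    (hv0 : ∀ M : C, IsZero M → v M = 0)
    (hvpos : ∀ M : C, ¬ IsZero M → (∀ i, 0 ≤ v M i) ∧ ∃ i, 0 < v M i)
    (hadd : ∀ S : ShortComplex C, S.ShortExact → v S.X₂ = v S.X₁ + v S.X₃)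
    -- `γ` is a red path:
    (γ : ℝ → Fin n → ℝ) (hcont : ContinuousOn γ (Set.Icc 0 1))
    (hγ0 : γ 0 = fun _ => (1 : ℝ)) (hγ1 : γ 1 = fun _ => (-1 : ℝ))
    (huniq : ∀ M : C, ¬ IsZero M →
      ∃! t : ℝ, t ∈ Set.Icc (0 : ℝ) 1 ∧ ∑ i, γ t i * v M i = 0)
    -- `tM M` is the unique zero of `t ↦ ⟨γ t, [M]⟩` on `[0,1]`, i.e. `φ_γ(M) = tM M`:
    (tM : C → ℝ)
    (htM : ∀ M : C, ¬ IsZero M →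
      tM M ∈ Set.Icc (0 : ℝ) 1 ∧ ∑ i, γ (tM M) i * v M i = 0)
    :
    ∀ M : C, ¬ IsZero M →
      ((∀ ⦃L : C⦄ (i : L ⟶ M), Mono i → ¬ IsZero L → ¬ IsIso i → tM L ≤ tM M) ↔
        ((∑ i, γ (tM M) i * v M i = 0) ∧
          ∀ ⦃L : C⦄ (i : L ⟶ M), Mono i → ¬ IsIso i →
            ∑ j, γ (tM M) j * v L j ≤ 0)) := by

  have key : ∀ L : C, ¬ IsZero L → ∀ t ∈ Set.Icc (0:ℝ) 1,
      (t < tM L → 0 < ∑ i, γ t i * v L i) ∧ (tM L < t → ∑ i, γ t i * v L i < 0) := by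
    intro L hL t ht
    set f : ℝ → ℝ := fun s => ∑ i, γ s i * v L i with hf
    have hfc : ContinuousOn f (Set.Icc 0 1) := by
      apply continuousOn_finset_sum
      intro i _
      exact ((continuous_apply i).comp_continuousOn hcont).mul continuousOn_const
    have hsum : 0 < ∑ i, v L i := by
      obtain ⟨hnn, i, hi⟩ := hvpos L hL
      exact Finset.sum_pos' (fun j _ => hnn j) ⟨i, Finset.mem_univ i, hi⟩
    have hf0 : f 0 = ∑ i, v L i := by simp [hf, hγ0]
    have hf1 : f 1 = -∑ i, v L i := by
      simp [hf, hγ1, neg_mul, Finset.sum_neg_distrib]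
    obtain ⟨htL, hfL⟩ := htM L hL
    have hunique : ∀ s ∈ Set.Icc (0:ℝ) 1, f s = 0 → s = tM L := by
      intro s hs hfs
      obtain ⟨t0, _, hu⟩ := huniq L hL
      rw [hu s ⟨hs, hfs⟩, hu (tM L) ⟨htL, hfL⟩]
    constructor
    · intro hlt
      by_contra hle
      push_neg at hle
      have h0 : (0:ℝ) ∈ Set.Icc (f t) (f 0) := ⟨hle, by rw [hf0]; exact hsum.le⟩
      obtain ⟨s, hs, hfs⟩ := intermediate_value_Icc' ht.1
        (hfc.mono (Set.Icc_subset_Icc le_rfl ht.2)) h0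
      have := hunique s ⟨hs.1, hs.2.trans ht.2⟩ hfs
      linarith [hs.2]
    · intro hlt
      by_contra hle
      push_neg at hle
      have h0 : (0:ℝ) ∈ Set.Icc (f 1) (f t) := ⟨by rw [hf1]; linarith, hle⟩
      obtain ⟨s, hs, hfs⟩ := intermediate_value_Icc' ht.2
        (hfc.mono (Set.Icc_subset_Icc ht.1 le_rfl)) h0
      have := hunique s ⟨ht.1.trans hs.1, hs.2⟩ hfs
      linarith [hs.1]
  intro M hM
  obtain ⟨htMm, hfM⟩ := htM M hM
  constructor
  · intro h
    refine ⟨hfM, ?_⟩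
    intro L i hi hni
    by_cases hL : IsZero L
    · simp [hv0 L hL]
    · have htle := h i hi hL hni
      rcases eq_or_lt_of_le htle with heq | hlt
      · rw [← heq]
        exact (htM L hL).2.le
      · exact ((key L hL (tM M) htMm).2 hlt).le
  · rintro ⟨-, hking⟩ L i hi hL hni
    by_contra hlt
    push_neg at hlt
    have := (key L hL (tM M) htMm).1 hlt
    linarith [hking i hi hni]
end
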